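/- Let (W,S) be a Coxeter system, J ⊆ S finitary with longest element w_J ∈ W_J, and H the Hecke algebra. The map φ: M(J) → b_{w_J}·H, 1 ⊗ h ↦ b_{w_J}·h, is an isomorphism of right H-modules, where M(J) = ℒ(v⁻¹) ⊗_{H_J} H is the spherical module. In particular, the elements {b_{w_J}·δ_x : x ∈ ᴶW} are linearly independent in H over ℤ[v,v⁻¹]. -/

import Mathlib

/-!
Write `b` for `b_{w_J}`. Reindexing the sum over `W_J` by `u ↦ u s` shows `b δ_s = v⁻¹ b` for
`s ∈ J`, and the quadratic relation propagates this to `b δ_u = v^{-ℓ(u)} b` for all `u ∈ W_J`;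
the same holds for the generator `m₁` of `M(J)`. Every `w` factors as `w = u x` with `u ∈ W_J`,
`x ∈ ᴶW` and `ℓ(w) = ℓ(u) + ℓ(x)` (Deodhar's lemma), so `δ_w = δ_u δ_x` and `m₁ h ↦ b h` is a
well-defined map of right `H`-modules. It is injective because `b δ_x` has coefficient `v^{ℓ(w_J)}`
at `δ_x` and `0` at every other `δ_y`, `y ∈ ᴶW`.

Deodhar's lemma needs the exchange condition. It follows from Tits' action of `W` on
`W × {±1}`, in which `s_i` acts by `(w, ε) ↦ (s_i w s_i, ±ε)` with the sign flipped exactly at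
`w = s_i`: it shows that the parity of the number of occurrences of `t` in the left inversion
sequence of a word depends only on the element of `W` the word represents. Hence a left descent
`s_i` of `π ω` occurs in the left inversion sequence of `ω`, and deleting the corresponding letter
of `ω` gives a word for `s_i · π ω`.
-/

namespace CoxeterSystem

open List
open scoped Classical

variable {B W : Type*} [Group W] {M : CoxeterMatrix B} (cs : CoxeterSystem M W) {J : Set B}

local prefix:100 "s " => cs.simple
local prefix:100 "π " => cs.wordProd
local prefix:100 "ℓ " => cs.length
local prefix:100 "lis " => cs.leftInvSeq
local notation "W_J" => Subgroup.closure (cs.simple '' J)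

theorem count_leftInvSeq_cons (i : B) (ω : List B) (w : W) :
    (lis (i :: ω)).count w = (lis ω).count (s i * w * s i) + if w = s i then 1 else 0 := by
  have hw : MulAut.conj (s i) (s i * w * s i) = w := by simp [mul_assoc]
  rw [leftInvSeq, count_cons]
  nth_rw 1 [← hw]
  rw [count_map_of_injective _ _ (MulAut.conj (s i)).injective]
  simp only [beq_iff_eq, @eq_comm _ (s i) w]

noncomputable def titsPerm (i : B) : Equiv.Perm (W × ℤˣ) :=
  Function.Involutive.toPerm (fun p => (s i * p.1 * s i, (if p.1 = s i then -1 else 1) * p.2))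
    (by
      rintro ⟨w, ε⟩
      by_cases hw : w = s i <;>
        simp [hw, mul_assoc, mul_eq_one_iff_eq_inv])

theorem titsPerm_apply (i : B) (w : W) (ε : ℤˣ) :
    cs.titsPerm i (w, ε) = (s i * w * s i, (if w = s i then -1 else 1) * ε) := rfl

theorem titsPerm_inv (i : B) : (cs.titsPerm i)⁻¹ = cs.titsPerm i := rfl

noncomputable def titsWordPerm (ω : List B) : Equiv.Perm (W × ℤˣ) := (ω.map cs.titsPerm).prod

theorem titsWordPerm_inv_apply (ω : List B) (w : W) (ε : ℤˣ) :
    (cs.titsWordPerm ω)⁻¹ (w, ε) = ((π ω)⁻¹ * w * π ω, (-1) ^ (lis ω).count w * ε) := by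
  induction ω generalizing w ε with
  | nil => simp [titsWordPerm]
  | cons i ω ih =>
    rw [titsWordPerm, map_cons, prod_cons, mul_inv_rev, Equiv.Perm.mul_apply, titsPerm_inv,
      titsPerm_apply, ← titsWordPerm, ih, count_leftInvSeq_cons, wordProd_cons]
    by_cases hw : w = s i <;> simp [hw, mul_assoc, pow_succ]

theorem titsWordPerm_alternatingWord (i i' : B) (m : ℕ) :
    cs.titsWordPerm (alternatingWord i i' (2 * m)) = (cs.titsPerm i * cs.titsPerm i') ^ m := by
  induction m with
  | zero => rfl
  | succ m ih =>
    rw [show 2 * (m + 1) = 2 * m + 1 + 1 by ring, alternatingWord_succ, alternatingWord_succ,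
      pow_succ, ← ih]
    simp [titsWordPerm]

theorem wordProd_alternatingWord_two_mul (i i' : B) :
    π (alternatingWord i i' (2 * M i i')) = 1 := by
  simp [prod_alternatingWord_eq_mul_pow, cs.simple_mul_simple_pow]

theorem even_count_leftInvSeq_alternatingWord (i i' : B) (w : W) :
    Even ((lis (alternatingWord i i' (2 * M i i'))).count w) := by
  set L := lis (alternatingWord i i' (2 * M i i'))
  have hlen : L.length = 2 * M i i' := by simp [L]
  have hperiod : L.drop (M i i') = L.take (M i i') := by
    apply ext_getElem (by simp [hlen]; omega)
    intro k h₁ h₂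
    simp only [length_drop, length_take, hlen] at h₁ h₂
    simp only [getElem_drop, getElem_take, L]
    rw [getElem_leftInvSeq_alternatingWord _ _ _ _ _ (by omega),
      getElem_leftInvSeq_alternatingWord _ _ _ _ _ (by omega),
      prod_alternatingWord_eq_mul_pow, prod_alternatingWord_eq_mul_pow]
    have hdiv (n : ℕ) : (2 * n + 1) / 2 = n := by omega
    simp [hdiv, pow_add, cs.simple_mul_simple_pow']
  rw [← take_append_drop (M i i') L, hperiod, count_append]
  exact ⟨_, rfl⟩

theorem isLiftable_titsPerm : M.IsLiftable cs.titsPerm := by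
  intro i i'
  rw [← titsWordPerm_alternatingWord, ← inv_eq_one]
  ext1 ⟨w, ε⟩
  rw [titsWordPerm_inv_apply, wordProd_alternatingWord_two_mul,
    (cs.even_count_leftInvSeq_alternatingWord i i' w).neg_one_pow]
  simp

theorem lift_titsPerm_wordProd (ω : List B) :
    cs.lift ⟨_, cs.isLiftable_titsPerm⟩ (π ω) = cs.titsWordPerm ω := by
  induction ω with
  | nil => simp [titsWordPerm]
  | cons i ω ih => rw [wordProd_cons, map_mul, ih, lift_apply_simple]; rfl

theorem neg_one_pow_count_leftInvSeq_eq {ω ω' : List B} (h : π ω = π ω') (w : W) :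
    (-1 : ℤˣ) ^ (lis ω).count w = (-1) ^ (lis ω').count w := by
  have hperm : cs.titsWordPerm ω = cs.titsWordPerm ω' := by
    rw [← lift_titsPerm_wordProd, h, lift_titsPerm_wordProd]
  simpa [titsWordPerm_inv_apply] using congrArg (fun σ => (σ⁻¹ (w, 1)).2) hperm

theorem simple_mem_leftInvSeq_of_isLeftDescent {ω : List B} {i : B}
    (h : cs.IsLeftDescent (π ω) i) : s i ∈ lis ω := by
  obtain ⟨θ, hθ, hθω⟩ := cs.exists_isReduced (s i * π ω)
  have hnot : s i ∉ lis θ := fun hmem => by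
    have := (cs.isLeftInversion_of_mem_leftInvSeq hθ hmem).2
    rw [← hθω, simple_mul_simple_cancel_left] at this
    exact lt_asymm h this
  have hcount : (lis (i :: θ)).count (s i) = 1 := by
    simp [count_leftInvSeq_cons, count_eq_zero_of_not_mem hnot]
  have hpar := cs.neg_one_pow_count_leftInvSeq_eq
    (show π ω = π (i :: θ) by rw [wordProd_cons, ← hθω, simple_mul_simple_cancel_left]) (s i)
  rw [hcount, pow_one] at hpar
  refine count_pos_iff.mp (Nat.pos_of_ne_zero fun h0 => ?_)
  rw [h0, pow_zero] at hpar
  exact absurd hpar (by decide)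

theorem exists_eraseIdx_of_isLeftDescent {ω : List B} {i : B}
    (h : cs.IsLeftDescent (π ω) i) : ∃ j < ω.length, s i * π ω = π (ω.eraseIdx j) := by
  obtain ⟨j, hj, hget⟩ := mem_iff_getElem.mp (cs.simple_mem_leftInvSeq_of_isLeftDescent h)
  rw [length_leftInvSeq] at hj
  refine ⟨j, hj, ?_⟩
  simpa [getD_eq_getElem?_getD, hj, hget] using cs.getD_leftInvSeq_mul_wordProd ω j

theorem exchange_append {ω ξ : List B} {i : B} (h : cs.IsLeftDescent (π ω * π ξ) i) :
    (∃ j < ω.length, s i * π ω = π (ω.eraseIdx j)) ∨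
      ∃ j < ξ.length, s i * π ω * π ξ = π ω * π (ξ.eraseIdx j) := by
  rw [← wordProd_append] at h
  obtain ⟨j, hj, hex⟩ := cs.exists_eraseIdx_of_isLeftDescent h
  rcases Nat.lt_or_ge j ω.length with hjω | hjω
  · left
    refine ⟨j, hjω, mul_right_cancel (b := π ξ) ?_⟩
    rwa [eraseIdx_append_of_lt_length hjω, wordProd_append, wordProd_append, ← mul_assoc] at hex
  · right
    refine ⟨j - ω.length, by rw [length_append] at hj; omega, ?_⟩
    rwa [eraseIdx_append_of_length_le hjω, wordProd_append, wordProd_append, ← mul_assoc] at hex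

theorem wordProd_mem_closure {ω : List B} (hω : ∀ i ∈ ω, i ∈ J) : π ω ∈ W_J :=
  list_prod_mem fun _ hw => by
    obtain ⟨i, hi, rfl⟩ := mem_map.mp hw
    exact Subgroup.subset_closure ⟨i, hω i hi, rfl⟩

theorem exists_isReduced_of_mem_closure {u : W} (hu : u ∈ W_J) :
    ∃ ω : List B, (∀ i ∈ ω, i ∈ J) ∧ cs.IsReduced ω ∧ π ω = u := by
  have step : ∀ i ∈ J, ∀ y : W, (∃ ω : List B, (∀ i ∈ ω, i ∈ J) ∧ cs.IsReduced ω ∧ π ω = y) →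
      ∃ ω : List B, (∀ i ∈ ω, i ∈ J) ∧ cs.IsReduced ω ∧ π ω = s i * y := by
    rintro i hi _ ⟨θ, hθJ, hθ, rfl⟩
    rcases cs.length_simple_mul (π θ) i with hlen | hlen
    · refine ⟨i :: θ, forall_mem_cons.mpr ⟨hi, hθJ⟩, ?_, wordProd_cons ..⟩
      rw [IsReduced, wordProd_cons, hlen, hθ.eq, length_cons]
    · obtain ⟨j, hj, hex⟩ := cs.exists_eraseIdx_of_isLeftDescent
        (show cs.IsLeftDescent (π θ) i by unfold IsLeftDescent; omega)
      refine ⟨θ.eraseIdx j, fun k hk => hθJ k ((eraseIdx_sublist θ j).subset hk), ?_, hex.symm⟩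
      rw [IsReduced, ← hex, length_eraseIdx_of_lt hj, ← hθ.eq]
      omega
  induction hu using Subgroup.closure_induction_left with
  | one => exact ⟨[], by simp, by simp [IsReduced], rfl⟩
  | mul_left x hx y _ ih =>
    obtain ⟨i, hi, rfl⟩ := hx
    exact step i hi y ih
  | inv_mul_cancel x hx y _ ih =>
    obtain ⟨i, hi, rfl⟩ := hx
    rw [inv_simple]
    exact step i hi y ih

def IsMinCosetRep (K : Subgroup W) (x : W) : Prop :=
  ∀ y : W, (∃ u ∈ K, y = u * x) → ℓ x ≤ ℓ y

theorem exists_mul_isMinCosetRep (K : Subgroup W) (w : W) :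
    ∃ u ∈ K, ∃ x, cs.IsMinCosetRep K x ∧ w = u * x := by
  obtain ⟨_, ⟨v, hv, rfl⟩, hmin⟩ := (measure cs.length).wf.has_min {y | ∃ u ∈ K, y = u * w}
    ⟨w, 1, K.one_mem, (one_mul w).symm⟩
  refine ⟨v⁻¹, inv_mem hv, v * w, ?_, by group⟩
  rintro _ ⟨u, hu, rfl⟩
  exact not_lt.mp (hmin _ ⟨u * v, mul_mem hu hv, (mul_assoc ..).symm⟩)

theorem length_wordProd_mul_of_isMinCosetRep {x : W} (hx : cs.IsMinCosetRep W_J x) {ω : List B}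
    (hωJ : ∀ i ∈ ω, i ∈ J) (hω : cs.IsReduced ω) : ℓ (π ω * x) = ω.length + ℓ x := by
  induction ω with
  | nil => simp
  | cons i ω ih =>
    rw [forall_mem_cons] at hωJ
    have ih := ih hωJ.2 (by simpa using hω.drop 1)
    have hiω : ℓ (s i * π ω) = ω.length + 1 := by rw [← wordProd_cons, hω.eq, length_cons]
    rw [wordProd_cons, mul_assoc, length_cons]
    rcases cs.length_simple_mul (π ω * x) i with hlen | hlen
    · omega
    obtain ⟨ξ, hξ, rfl⟩ := cs.exists_isReduced x
    rcases cs.exchange_append (show cs.IsLeftDescent (π ω * π ξ) i by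
      unfold IsLeftDescent; omega) with ⟨j, hj, hex⟩ | ⟨j, hj, hex⟩
    · have := cs.length_wordProd_le (ω.eraseIdx j)
      rw [← hex, hiω, length_eraseIdx_of_lt hj] at this
      omega
    · have hconj : (π ω)⁻¹ * s i * π ω ∈ W_J :=
        mul_mem (mul_mem (inv_mem (cs.wordProd_mem_closure hωJ.2))
          (Subgroup.subset_closure ⟨i, hωJ.1, rfl⟩)) (cs.wordProd_mem_closure hωJ.2)
      have hmin : ℓ (π ξ) ≤ ℓ (π (ξ.eraseIdx j)) := hx _ ⟨_, hconj, by
        rw [← inv_mul_cancel_left (π ω) (π (ξ.eraseIdx j)), ← hex]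
        simp only [mul_assoc]⟩
      have := cs.length_wordProd_le (ξ.eraseIdx j)
      rw [length_eraseIdx_of_lt hj] at this
      have := hξ.eq
      omega

theorem length_mul_of_isMinCosetRep {x u : W} (hx : cs.IsMinCosetRep W_J x) (hu : u ∈ W_J) :
    ℓ (u * x) = ℓ u + ℓ x := by
  obtain ⟨ω, hωJ, hω, rfl⟩ := cs.exists_isReduced_of_mem_closure hu
  rw [cs.length_wordProd_mul_of_isMinCosetRep hx hωJ hω, hω.eq]

variable {cs} in
theorem IsMinCosetRep.eq_one_of_mul_eq {x x' u : W} (hx : cs.IsMinCosetRep W_J x)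
    (hx' : cs.IsMinCosetRep W_J x') (hu : u ∈ W_J) (h : u * x = x') : u = 1 := by
  have hlen := cs.length_mul_of_isMinCosetRep hx hu
  have hle := hx' x ⟨u⁻¹, inv_mem hu, by rw [← h, inv_mul_cancel_left]⟩
  rw [h] at hlen
  exact cs.length_eq_zero_iff.mp (by omega)

section Hecke

open LaurentPolynomial MulOpposite

variable {H : Type*} [Ring H] [Algebra ℤ[T;T⁻¹] H]

structure IsHeckeBasis (δ : Module.Basis W ℤ[T;T⁻¹] H) : Prop where
  one : δ 1 = 1
  mul_of_length_add : ∀ u w : W, ℓ (u * w) = ℓ u + ℓ w → δ u * δ w = δ (u * w)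
  simple_mul_self : ∀ i : B, δ (s i) * δ (s i) = 1 + (T (-1) - T 1 : ℤ[T;T⁻¹]) • δ (s i)

/-- The defining relation of the spherical module `M(J)`. -/
def IsSpherical (δ : Module.Basis W ℤ[T;T⁻¹] H) (J : Set B) {N : Type*} [AddCommGroup N]
    [Module ℤ[T;T⁻¹] N] [Module Hᵐᵒᵖ N] (n : N) : Prop :=
  ∀ j ∈ J, op (δ (s j)) • n = (T (-1) : ℤ[T;T⁻¹]) • n

variable {cs} {δ : Module.Basis W ℤ[T;T⁻¹] H}

theorem IsHeckeBasis.mul_simple (hδ : cs.IsHeckeBasis δ) (u : W) (i : B) :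
    δ u * δ (s i) =
      δ (u * s i) + if cs.IsRightDescent u i then (T (-1) - T 1 : ℤ[T;T⁻¹]) • δ u else 0 := by
  rcases cs.length_mul_simple u i with hlen | hlen
  · rw [if_neg (by unfold IsRightDescent; omega), add_zero,
      hδ.mul_of_length_add _ _ (by rw [hlen, length_simple])]
  · have hu : δ (u * s i) * δ (s i) = δ u := by
      rw [hδ.mul_of_length_add _ _ (by rw [simple_mul_simple_cancel_right, length_simple]; omega),
        simple_mul_simple_cancel_right]
    rw [if_pos (by unfold IsRightDescent; omega), ← hu, mul_assoc, hδ.simple_mul_self, mul_add,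
      mul_one, mul_smul_comm]

section Module

variable {N : Type*} [AddCommGroup N] [Module ℤ[T;T⁻¹] N] [Module Hᵐᵒᵖ N]
  [IsScalarTower ℤ[T;T⁻¹] Hᵐᵒᵖ N]

theorem IsSpherical.op_smul_eq (hδ : cs.IsHeckeBasis δ) {n : N} (hn : cs.IsSpherical δ J n)
    {u : W} (hu : u ∈ W_J) : op (δ u) • n = (T (-ℓ u : ℤ) : ℤ[T;T⁻¹]) • n := by
  have step : ∀ j ∈ J, ∀ x : W, op (δ x) • n = (T (-ℓ x : ℤ) : ℤ[T;T⁻¹]) • n →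
      op (δ (x * s j)) • n = (T (-ℓ (x * s j) : ℤ) : ℤ[T;T⁻¹]) • n := by
    intro j hj x hx
    have hxs : op (δ x * δ (s j)) • n = (T (-ℓ x : ℤ) * T (-1) : ℤ[T;T⁻¹]) • n := by
      rw [op_mul, mul_smul, hx, smul_comm, hn j hj, smul_smul]
    rw [hδ.mul_simple] at hxs
    rcases cs.length_mul_simple x j with hlen | hlen
    · rw [if_neg (by unfold IsRightDescent; omega), add_zero] at hxs
      rw [hxs, ← T_add, hlen]
      push_cast
      ring_nf
    · rw [if_pos (by unfold IsRightDescent; omega), op_add, add_smul, op_smul, smul_assoc, hx,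
        smul_smul, ← eq_sub_iff_add_eq, ← sub_smul] at hxs
      rw [hxs]
      congr 1
      have : (ℓ x : ℤ) = ℓ (x * s j) + 1 := by omega
      rw [this, sub_mul, ← T_add, ← T_add, ← T_add]
      ring_nf
  induction hu using Subgroup.closure_induction_right with
  | one => simp [hδ.one]
  | mul_right x _ y hy ih =>
    obtain ⟨j, hj, rfl⟩ := hy
    exact step j hj x ih
  | mul_inv_cancel x _ y hy ih =>
    obtain ⟨j, hj, rfl⟩ := hy
    rw [inv_simple]
    exact step j hj x ih

/-- The universal property of `M(J)`: every spherical `n'` is the image of the generator `n₀`. -/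
theorem IsHeckeBasis.exists_linearMap_of_isSpherical (hδ : cs.IsHeckeBasis δ) {n₀ : N}
    (hgen : ∀ n : N, ∃ h : H, n = op h • n₀) (hn₀ : cs.IsSpherical δ J n₀)
    (bas : Module.Basis {x // cs.IsMinCosetRep W_J x} ℤ[T;T⁻¹] N)
    (hbas : ∀ x, bas x = op (δ x.1) • n₀) {N' : Type*} [AddCommGroup N'] [Module ℤ[T;T⁻¹] N']
    [Module Hᵐᵒᵖ N'] [IsScalarTower ℤ[T;T⁻¹] Hᵐᵒᵖ N'] {n' : N'} (hn' : cs.IsSpherical δ J n') :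
    ∃ φ : N →ₗ[Hᵐᵒᵖ] N', ∀ h : H, φ (op h • n₀) = op h • n' := by
  let φ₀ := bas.constr ℤ[T;T⁻¹] fun x => op (δ x.1) • n'
  have hφ₀ : ∀ h : H, φ₀ (op h • n₀) = op h • n' := by
    have : φ₀ ∘ₗ (opLinearEquiv ℤ[T;T⁻¹]).toLinearMap.smulRight n₀ =
        (opLinearEquiv ℤ[T;T⁻¹]).toLinearMap.smulRight n' := δ.ext fun w => by
      obtain ⟨u, hu, x, hx, rfl⟩ := cs.exists_mul_isMinCosetRep W_J w
      have hux : δ (u * x) = δ u * δ x :=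
        (hδ.mul_of_length_add u x (cs.length_mul_of_isMinCosetRep hx hu)).symm
      simp only [LinearMap.comp_apply, LinearMap.smulRight_apply, LinearEquiv.coe_coe,
        coe_opLinearEquiv, hux, op_mul, mul_smul, hn₀.op_smul_eq hδ hu, hn'.op_smul_eq hδ hu,
        smul_comm _ (T _ : ℤ[T;T⁻¹])]
      rw [← hbas ⟨x, hx⟩, map_smul, bas.constr_basis]
    exact fun h => LinearMap.congr_fun this h
  refine ⟨{ φ₀ with map_smul' := fun a n => ?_ }, hφ₀⟩
  obtain ⟨h, rfl⟩ := hgen n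
  rw [RingHom.id_apply, ← mul_smul, ← op_unop a, ← op_mul, AddHom.toFun_eq_coe,
    LinearMap.coe_toAddHom, hφ₀, hφ₀, op_mul, mul_smul]

end Module

theorem IsHeckeBasis.sum_mul_simple (hδ : cs.IsHeckeBasis δ) (K : Subgroup W) [Fintype K]
    (L : ℤ) {i : B} (hi : s i ∈ K) :
    (∑ u : K, (T (L - ℓ (u : W)) : ℤ[T;T⁻¹]) • δ (u : W)) * δ (s i) =
      (T (-1) : ℤ[T;T⁻¹]) • ∑ u : K, (T (L - ℓ (u : W)) : ℤ[T;T⁻¹]) • δ (u : W) := by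
  have hshift : ∑ u : K, (T (L - ℓ (u : W)) : ℤ[T;T⁻¹]) • δ ((u : W) * s i) =
      ∑ u : K, (T (L - ℓ ((u : W) * s i)) : ℤ[T;T⁻¹]) • δ (u : W) :=
    Fintype.sum_equiv (Equiv.mulRight ⟨s i, hi⟩) _ _ fun u => by
      simp [simple_mul_simple_cancel_right]
  simp only [Finset.sum_mul, smul_mul_assoc, hδ.mul_simple, smul_add]
  rw [Finset.sum_add_distrib, hshift, ← Finset.sum_add_distrib, Finset.smul_sum]
  refine Finset.sum_congr rfl fun u _ => ?_
  rcases cs.length_mul_simple u i with hlen | hlen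
  · rw [if_neg (by unfold IsRightDescent; omega), smul_zero, add_zero, hlen, smul_smul, ← T_add]
    push_cast
    ring_nf
  · rw [if_pos (by unfold IsRightDescent; omega), smul_smul, ← add_smul, smul_smul]
    congr 1
    have : (ℓ (u : W) : ℤ) = ℓ ((u : W) * s i) + 1 := by omega
    rw [this, mul_sub, ← T_add, ← T_add, ← T_add]
    ring_nf

theorem IsHeckeBasis.repr_sum_mul (hδ : cs.IsHeckeBasis δ) [Fintype W_J] (L : ℤ) {x y : W}
    (hx : cs.IsMinCosetRep W_J x) (hy : cs.IsMinCosetRep W_J y) :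
    δ.repr ((∑ u : W_J, (T (L - ℓ (u : W)) : ℤ[T;T⁻¹]) • δ (u : W)) * δ x) y =
      if x = y then T L else 0 := by
  have hux (u : W_J) : δ u * δ x = δ (u * x) :=
    hδ.mul_of_length_add _ _ (cs.length_mul_of_isMinCosetRep hx u.2)
  simp only [Finset.sum_mul, smul_mul_assoc, hux, map_sum, map_smul, Finsupp.finsetSum_apply,
    Finsupp.smul_apply, Module.Basis.repr_self, Finsupp.single_apply, smul_eq_mul, mul_ite,
    mul_one, mul_zero]
  rw [Finset.sum_eq_single 1 (fun u _ hu => if_neg fun h =>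
      hu (Subtype.ext (hx.eq_one_of_mul_eq hy u.2 h))) (by simp)]
  simp

variable (J) in
theorem IsHeckeBasis.linearIndependent_sum_mul (hδ : cs.IsHeckeBasis δ) [Fintype W_J] (L : ℤ) :
    LinearIndependent ℤ[T;T⁻¹] fun x : {x // cs.IsMinCosetRep W_J x} =>
      (∑ u : W_J, (T (L - ℓ (u : W)) : ℤ[T;T⁻¹]) • δ (u : W)) * δ x.1 := by
  let Φ := Finsupp.lcomapDomain _ (Subtype.val_injective (p := cs.IsMinCosetRep W_J)) ∘ₗ
    δ.repr.toLinearMap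
  refine LinearIndependent.of_comp Φ ?_
  have hΦ (x : {x // cs.IsMinCosetRep W_J x}) :
      Φ ((∑ u : W_J, (T (L - ℓ (u : W)) : ℤ[T;T⁻¹]) • δ (u : W)) * δ x.1) =
        Finsupp.single x (T L) := by
    ext y
    simp [Φ, hδ.repr_sum_mul L x.2 y.2, Finsupp.single_apply, Subtype.ext_iff]
  simp only [Function.comp_def, hΦ]
  exact Finsupp.linearIndependent_single_of_ne_zero fun _ => (isUnit_T L).ne_zero

end Hecke

end CoxeterSystem

open LaurentPolynomial MulOpposite

theorem stmt_6_general {B W : Type} [Group W] {M : CoxeterMatrix B} (cs : CoxeterSystem M W)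
    (J : Set B) (WJ : Subgroup W) (hWJ : WJ = Subgroup.closure (cs.simple '' J))
    [Fintype WJ]
    (H : Type) [Ring H] [Algebra (LaurentPolynomial ℤ) H]
    (δ : Module.Basis W (LaurentPolynomial ℤ) H) (hδ1 : δ 1 = 1)
    (hmul : ∀ u w : W, cs.length (u * w) = cs.length u + cs.length w →
        δ u * δ w = δ (u * w))
    (hquad : ∀ i : B, δ (cs.simple i) * δ (cs.simple i)
        = 1 + ((T (-1) - T 1 : LaurentPolynomial ℤ)) • δ (cs.simple i))
    (wJ : W)
    (MM : Type) [AddCommGroup MM] [Module (LaurentPolynomial ℤ) MM]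
    [Module Hᵐᵒᵖ MM] [IsScalarTower (LaurentPolynomial ℤ) Hᵐᵒᵖ MM]
    (m1 : MM)
    (hgen : ∀ m : MM, ∃ h : H, m = op h • m1)
    (hsph : ∀ j ∈ J, op (δ (cs.simple j)) • m1 = (T (-1) : LaurentPolynomial ℤ) • m1)
    (bas : Module.Basis {x : W // ∀ y : W, (∃ u ∈ WJ, y = u * x) → cs.length x ≤ cs.length y}
        (LaurentPolynomial ℤ) MM)
    (hbas : ∀ x, bas x = op (δ x.1) • m1) :
    (∃ φ : MM →ₗ[Hᵐᵒᵖ] H,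
        φ m1 = (∑ u : WJ,
            (T ((cs.length wJ : ℤ) - (cs.length (u : W) : ℤ)) : LaurentPolynomial ℤ) • δ (u : W)) ∧
        Function.Injective φ ∧
        LinearMap.range φ = Submodule.span Hᵐᵒᵖ
          {∑ u : WJ,
            (T ((cs.length wJ : ℤ) - (cs.length (u : W) : ℤ)) : LaurentPolynomial ℤ) • δ (u : W)}) ∧
    LinearIndependent (LaurentPolynomial ℤ)
      (fun x : {x : W // ∀ y : W, (∃ u ∈ WJ, y = u * x) → cs.length x ≤ cs.length y} =>
        (∑ u : WJ,
          (T ((cs.length wJ : ℤ) - (cs.length (u : W) : ℤ)) : LaurentPolynomial ℤ) • δ (u : W))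
          * δ x.1) := by
  subst hWJ
  have hδ : cs.IsHeckeBasis δ := ⟨hδ1, hmul, hquad⟩
  set b := ∑ u : Subgroup.closure (cs.simple '' J),
    (T ((cs.length wJ : ℤ) - (cs.length (u : W) : ℤ)) : LaurentPolynomial ℤ) • δ (u : W)
  have hb : cs.IsSpherical δ J b :=
    fun j hj => hδ.sum_mul_simple _ _ (Subgroup.subset_closure ⟨j, hj, rfl⟩)
  obtain ⟨φ, hφ⟩ := hδ.exists_linearMap_of_isSpherical hgen hsph bas hbas hb
  have hφm1 : φ m1 = b := by simpa [hδ1] using hφ 1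
  have hli := hδ.linearIndependent_sum_mul J (cs.length wJ)
  refine ⟨⟨φ, hφm1, ?_, ?_⟩, hli⟩
  · refine LinearMap.injective_of_linearIndependent (f := φ.restrictScalars (LaurentPolynomial ℤ))
      bas.span_eq ?_
    simp only [Function.comp_def, LinearMap.coe_restrictScalars, hbas, hφ, op_smul_eq_mul]
    exact hli
  · have htop : Submodule.span Hᵐᵒᵖ {m1} = ⊤ := Submodule.eq_top_iff'.mpr fun m =>
      Submodule.mem_span_singleton.mpr (let ⟨h, hh⟩ := hgen m; ⟨op h, hh.symm⟩)
    rw [LinearMap.range_eq_map, ← htop, Submodule.map_span, Set.image_singleton, hφm1]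

/-- The map φ : M(J) → b_{w_J}·H, 1 ⊗ h ↦ b_{w_J}·h is an isomorphism of
right H-modules, where M(J) is the spherical module; in particular the elements
{b_{w_J}·δ_x : x ∈ ᴶW} are linearly independent over ℤ[v,v⁻¹]. The spherical module
M(J) is presented abstractly as a right H-module MM generated by m1 on which δ_s acts by
v⁻¹ for s ∈ J, with standard basis {op (δ x) • m1 : x ∈ ᴶW}. -/
theorem stmt_6 {B W : Type} [Group W] {M : CoxeterMatrix B} (cs : CoxeterSystem M W)
    (J : Set B) (WJ : Subgroup W) (hWJ : WJ = Subgroup.closure (cs.simple '' J))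
    [Fintype WJ]
    (H : Type) [Ring H] [Algebra (LaurentPolynomial ℤ) H]
    (δ : Module.Basis W (LaurentPolynomial ℤ) H) (hδ1 : δ 1 = 1)
    (hmul : ∀ u w : W, cs.length (u * w) = cs.length u + cs.length w →
        δ u * δ w = δ (u * w))
    (hquad : ∀ i : B, δ (cs.simple i) * δ (cs.simple i)
        = 1 + ((T (-1) - T 1 : LaurentPolynomial ℤ)) • δ (cs.simple i))
    (wJ : W) (hwJmem : wJ ∈ WJ) (hwJmax : ∀ u ∈ WJ, cs.length u ≤ cs.length wJ)
    (MM : Type) [AddCommGroup MM] [Module (LaurentPolynomial ℤ) MM]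
    [Module Hᵐᵒᵖ MM] [IsScalarTower (LaurentPolynomial ℤ) Hᵐᵒᵖ MM]
    (m1 : MM)
    (hgen : ∀ m : MM, ∃ h : H, m = op h • m1)
    (hsph : ∀ j ∈ J, op (δ (cs.simple j)) • m1 = (T (-1) : LaurentPolynomial ℤ) • m1)
    (bas : Module.Basis {x : W // ∀ y : W, (∃ u ∈ WJ, y = u * x) → cs.length x ≤ cs.length y}
        (LaurentPolynomial ℤ) MM)
    (hbas : ∀ x, bas x = op (δ x.1) • m1) :
    (∃ φ : MM →ₗ[Hᵐᵒᵖ] H,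
        φ m1 = (∑ u : WJ,
            (T ((cs.length wJ : ℤ) - (cs.length (u : W) : ℤ)) : LaurentPolynomial ℤ) • δ (u : W)) ∧
        Function.Injective φ ∧
        LinearMap.range φ = Submodule.span Hᵐᵒᵖ
          {∑ u : WJ,
            (T ((cs.length wJ : ℤ) - (cs.length (u : W) : ℤ)) : LaurentPolynomial ℤ) • δ (u : W)}) ∧
    LinearIndependent (LaurentPolynomial ℤ)
      (fun x : {x : W // ∀ y : W, (∃ u ∈ WJ, y = u * x) → cs.length x ≤ cs.length y} =>
        (∑ u : WJ,
          (T ((cs.length wJ : ℤ) - (cs.length (u : W) : ℤ)) : LaurentPolynomial ℤ) • δ (u : W))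
          * δ x.1) :=
  stmt_6_general cs J WJ hWJ H δ hδ1 hmul hquad wJ MM m1 hgen hsph bas hbas
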